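/- Let N ≥ 2 and let f_{j,0}: ℝ² → ℝ for 0 ≤ j ≤ N each be a polynomial of total degree at most N (with f_{j,0} := 0 for j outside this range). Define φ_{j,1} := ((j+1)/2) ∂_x f_{j+1,0} + ((N−j)/2) ∂_y f_{j,0}, φ_{j,2} := (1/2) Σ_{a=0}^{2} C(j+a, a) C(N−j−a, 2−a) ∂_x^a ∂_y^{2−a} f_{j+a,0} (with C the binomial coefficient, 0 for invalid entries, and φ_{−1,2} := 0), and the quantum correction Q_{j,2} := 2 ∂_x φ_{j−1,2} + 2 ∂_y φ_{j,2} + ∂_x² φ_{j,1} + ∂_y² φ_{j,1}. Then for every 0 ≤ j ≤ N−1, the function ∂_x^{N−1−j} ∂_y^j Q_{j,2} vanishes identically on ℝ². -/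

import Mathlib

/-! Each `f_{k,0}` is a polynomial of total degree at most `N`, and `Q_{j,2}` is a linear
combination of third-order partial derivatives of them, so it has total degree at most `N - 3`.
Hence `N - 1` further partial derivatives annihilate it. -/

noncomputable section

/-- Partial derivative with respect to `x` of a function on `ℝ²`. -/
def pdx (f : ℝ × ℝ → ℝ) : ℝ × ℝ → ℝ := fun q => fderiv ℝ f q (1, 0)

/-- Partial derivative with respect to `y` of a function on `ℝ²`. -/
def pdy (f : ℝ × ℝ → ℝ) : ℝ × ℝ → ℝ := fun q => fderiv ℝ f q (0, 1)

/-- Binomial coefficient with integer entries, equal to `0` when the lower entry is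
negative or exceeds the upper entry. -/
def intChoose (n k : ℤ) : ℝ :=
  if 0 ≤ k ∧ k ≤ n then (n.toNat.choose k.toNat : ℝ) else 0

/-- `φ_{j,1} = ((j+1)/2) ∂_x f_{j+1,0} + ((N−j)/2) ∂_y f_{j,0}`. -/
def phi1 (N : ℕ) (f0 : ℤ → ℝ × ℝ → ℝ) (j : ℤ) : ℝ × ℝ → ℝ := fun q =>
  ((j : ℝ) + 1) / 2 * pdx (f0 (j + 1)) q + ((N : ℝ) - (j : ℝ)) / 2 * pdy (f0 j) q

/-- `φ_{j,2} = (1/2) Σ_{a=0}^{2} C(j+a,a) C(N−j−a,2−a) ∂_x^a ∂_y^{2−a} f_{j+a,0}`,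
with the convention `φ_{−1,2} = 0`. -/
def phi2 (N : ℕ) (f0 : ℤ → ℝ × ℝ → ℝ) (j : ℤ) : ℝ × ℝ → ℝ :=
  if j = -1 then 0 else fun q =>
    (1 / 2) * ∑ a ∈ Finset.range 3,
      intChoose (j + (a : ℤ)) (a : ℤ) * intChoose ((N : ℤ) - j - (a : ℤ)) (2 - (a : ℤ)) *
        (pdx^[a] (pdy^[2 - a] (f0 (j + (a : ℤ))))) q

/-- The quantum correction `Q_{j,2} = 2∂_x φ_{j−1,2} + 2∂_y φ_{j,2} + ∂_x² φ_{j,1} + ∂_y² φ_{j,1}`. -/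
def Q2 (N : ℕ) (f0 : ℤ → ℝ × ℝ → ℝ) (j : ℤ) : ℝ × ℝ → ℝ := fun q =>
  2 * pdx (phi2 N f0 (j - 1)) q + 2 * pdy (phi2 N f0 j) q +
    (pdx^[2] (phi1 N f0 j)) q + (pdy^[2] (phi1 N f0 j)) q

open Finset

def polyFunDegreeLT (d : ℕ) : Submodule ℝ (ℝ × ℝ → ℝ) :=
  Submodule.span ℝ {f | ∃ a b : ℕ, a + b < d ∧ f = fun q => q.1 ^ a * q.2 ^ b}

theorem polyFunDegreeLT_mono : Monotone polyFunDegreeLT := fun _ _ hde =>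
  Submodule.span_mono fun _ ⟨a, b, hab, hf⟩ => ⟨a, b, hab.trans_le hde, hf⟩

theorem polyFunDegreeLT_zero : polyFunDegreeLT 0 = ⊥ := by
  simp [polyFunDegreeLT]

theorem monomial_mem_polyFunDegreeLT {d a b : ℕ} (h : a + b < d) :
    (fun q : ℝ × ℝ => q.1 ^ a * q.2 ^ b) ∈ polyFunDegreeLT d :=
  Submodule.subset_span ⟨a, b, h, rfl⟩

theorem sum_monomials_mem_polyFunDegreeLT (d : ℕ) (c : ℕ → ℕ → ℝ) :
    (fun q : ℝ × ℝ => ∑ a ∈ range d, ∑ b ∈ range (d - a), c a b * q.1 ^ a * q.2 ^ b) ∈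
      polyFunDegreeLT d := by
  have hsum : (fun q : ℝ × ℝ => ∑ a ∈ range d, ∑ b ∈ range (d - a), c a b * q.1 ^ a * q.2 ^ b) =
      ∑ a ∈ range d, ∑ b ∈ range (d - a), c a b • fun q : ℝ × ℝ => q.1 ^ a * q.2 ^ b := by
    ext q
    simp [Finset.sum_apply, mul_assoc]
  rw [hsum]
  refine Submodule.sum_mem _ fun a ha => Submodule.sum_mem _ fun b hb =>
    Submodule.smul_mem _ _ (monomial_mem_polyFunDegreeLT ?_)
  rw [mem_range] at ha hb
  omega

theorem differentiable_of_mem_polyFunDegreeLT {d : ℕ} {f : ℝ × ℝ → ℝ}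
    (hf : f ∈ polyFunDegreeLT d) : Differentiable ℝ f := by
  induction hf using Submodule.span_induction with
  | mem f hf => obtain ⟨a, b, -, rfl⟩ := hf; fun_prop
  | zero => exact differentiable_const 0
  | add f g _ _ hf hg => exact hf.add hg
  | smul c f _ hf => exact hf.const_smul c

theorem fderiv_monomial_apply (a b : ℕ) (q v : ℝ × ℝ) :
    fderiv ℝ (fun q : ℝ × ℝ => q.1 ^ a * q.2 ^ b) q v =
      v.1 * ((a : ℝ) * q.1 ^ (a - 1) * q.2 ^ b) + v.2 * ((b : ℝ) * q.1 ^ a * q.2 ^ (b - 1)) := by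
  have hx : HasFDerivAt (fun p : ℝ × ℝ => p.1 ^ a)
      (((a : ℝ) * q.1 ^ (a - 1)) • ContinuousLinearMap.fst ℝ ℝ ℝ) q :=
    (hasDerivAt_pow a q.1).comp_hasFDerivAt q hasFDerivAt_fst
  have hy : HasFDerivAt (fun p : ℝ × ℝ => p.2 ^ b)
      (((b : ℝ) * q.2 ^ (b - 1)) • ContinuousLinearMap.snd ℝ ℝ ℝ) q :=
    (hasDerivAt_pow b q.2).comp_hasFDerivAt q hasFDerivAt_snd
  have hxy : HasFDerivAt (fun p : ℝ × ℝ => p.1 ^ a * p.2 ^ b)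
      (q.1 ^ a • ((b : ℝ) * q.2 ^ (b - 1)) • ContinuousLinearMap.snd ℝ ℝ ℝ +
        q.2 ^ b • ((a : ℝ) * q.1 ^ (a - 1)) • ContinuousLinearMap.fst ℝ ℝ ℝ) q :=
    hx.mul hy
  rw [hxy.fderiv]
  simp only [add_apply, smul_apply,
    ContinuousLinearMap.coe_snd', ContinuousLinearMap.coe_fst', smul_eq_mul]
  ring

theorem natCast_mul_pow_pred_mul_mem_polyFunDegreeLT {d a b : ℕ} (h : a + b < d + 1) :
    (fun q : ℝ × ℝ => (a : ℝ) * q.1 ^ (a - 1) * q.2 ^ b) ∈ polyFunDegreeLT d := by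
  rcases a with _ | a
  · simp only [CharP.cast_eq_zero, zero_mul]
    exact zero_mem _
  · convert (polyFunDegreeLT d).smul_mem ((a + 1 : ℕ) : ℝ)
      (monomial_mem_polyFunDegreeLT (a := a) (b := b) (by omega)) using 1
    ext q; simp [mul_assoc]

theorem natCast_mul_mul_pow_pred_mem_polyFunDegreeLT {d a b : ℕ} (h : a + b < d + 1) :
    (fun q : ℝ × ℝ => (b : ℝ) * q.1 ^ a * q.2 ^ (b - 1)) ∈ polyFunDegreeLT d := by
  rcases b with _ | b
  · simp only [CharP.cast_eq_zero, zero_mul]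
    exact zero_mem _
  · convert (polyFunDegreeLT d).smul_mem ((b + 1 : ℕ) : ℝ)
      (monomial_mem_polyFunDegreeLT (a := a) (b := b) (by omega)) using 1
    ext q; simp [mul_assoc]

theorem fderiv_apply_mem_polyFunDegreeLT {d : ℕ} {f : ℝ × ℝ → ℝ}
    (hf : f ∈ polyFunDegreeLT (d + 1)) (v : ℝ × ℝ) :
    (fun q => fderiv ℝ f q v) ∈ polyFunDegreeLT d := by
  induction hf using Submodule.span_induction with
  | mem f hf =>
    obtain ⟨a, b, hab, rfl⟩ := hf
    have hderiv : (fun q => fderiv ℝ (fun q : ℝ × ℝ => q.1 ^ a * q.2 ^ b) q v) =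
        v.1 • (fun q : ℝ × ℝ => (a : ℝ) * q.1 ^ (a - 1) * q.2 ^ b) +
          v.2 • (fun q : ℝ × ℝ => (b : ℝ) * q.1 ^ a * q.2 ^ (b - 1)) := by
      ext q; simp [fderiv_monomial_apply]
    rw [hderiv]
    exact add_mem (Submodule.smul_mem _ _ (natCast_mul_pow_pred_mul_mem_polyFunDegreeLT hab))
      (Submodule.smul_mem _ _ (natCast_mul_mul_pow_pred_mem_polyFunDegreeLT hab))
  | zero =>
    simp only [fderiv_zero]
    exact zero_mem _
  | add f g hf hg ihf ihg =>
    have hadd : (fun q => fderiv ℝ (f + g) q v) =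
        (fun q => fderiv ℝ f q v) + fun q => fderiv ℝ g q v := by
      ext q
      simp [fderiv_add (differentiable_of_mem_polyFunDegreeLT hf q)
        (differentiable_of_mem_polyFunDegreeLT hg q)]
    rw [hadd]
    exact add_mem ihf ihg
  | smul c f hf ihf =>
    have hsmul : (fun q => fderiv ℝ (c • f) q v) = c • fun q => fderiv ℝ f q v := by
      ext q
      simp [fderiv_const_smul (differentiable_of_mem_polyFunDegreeLT hf q)]
    rw [hsmul]
    exact Submodule.smul_mem _ c ihf

theorem iterate_fderiv_apply_mem_polyFunDegreeLT {d : ℕ} {f : ℝ × ℝ → ℝ}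
    (hf : f ∈ polyFunDegreeLT d) (v : ℝ × ℝ) (k : ℕ) :
    (fun (g : ℝ × ℝ → ℝ) q => fderiv ℝ g q v)^[k] f ∈ polyFunDegreeLT (d - k) := by
  induction k with
  | zero => simpa using hf
  | succ k ih =>
    rw [Function.iterate_succ_apply']
    exact fderiv_apply_mem_polyFunDegreeLT (polyFunDegreeLT_mono (by omega) ih) v

theorem iterate_pdx_mem_polyFunDegreeLT {d : ℕ} {f : ℝ × ℝ → ℝ}
    (hf : f ∈ polyFunDegreeLT d) (k : ℕ) : pdx^[k] f ∈ polyFunDegreeLT (d - k) :=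
  iterate_fderiv_apply_mem_polyFunDegreeLT hf (1, 0) k

theorem iterate_pdy_mem_polyFunDegreeLT {d : ℕ} {f : ℝ × ℝ → ℝ}
    (hf : f ∈ polyFunDegreeLT d) (k : ℕ) : pdy^[k] f ∈ polyFunDegreeLT (d - k) :=
  iterate_fderiv_apply_mem_polyFunDegreeLT hf (0, 1) k

theorem pdx_mem_polyFunDegreeLT {d : ℕ} {f : ℝ × ℝ → ℝ}
    (hf : f ∈ polyFunDegreeLT (d + 1)) : pdx f ∈ polyFunDegreeLT d :=
  fderiv_apply_mem_polyFunDegreeLT hf (1, 0)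

theorem pdy_mem_polyFunDegreeLT {d : ℕ} {f : ℝ × ℝ → ℝ}
    (hf : f ∈ polyFunDegreeLT (d + 1)) : pdy f ∈ polyFunDegreeLT d :=
  fderiv_apply_mem_polyFunDegreeLT hf (0, 1)

section QuantumCorrection

variable {N d : ℕ} {f0 : ℤ → ℝ × ℝ → ℝ}

theorem phi1_mem_polyFunDegreeLT (hf : ∀ k, f0 k ∈ polyFunDegreeLT (d + 1)) (j : ℤ) :
    phi1 N f0 j ∈ polyFunDegreeLT d := by
  have hphi1 : phi1 N f0 j =
      (((j : ℝ) + 1) / 2) • pdx (f0 (j + 1)) + (((N : ℝ) - j) / 2) • pdy (f0 j) := by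
    ext q
    simp only [phi1, Pi.add_apply, Pi.smul_apply, smul_eq_mul]
  rw [hphi1]
  exact add_mem (Submodule.smul_mem _ _ (pdx_mem_polyFunDegreeLT (hf (j + 1))))
    (Submodule.smul_mem _ _ (pdy_mem_polyFunDegreeLT (hf j)))

theorem phi2_mem_polyFunDegreeLT (hf : ∀ k, f0 k ∈ polyFunDegreeLT (d + 1)) (j : ℤ) :
    phi2 N f0 j ∈ polyFunDegreeLT (d - 1) := by
  unfold phi2
  split_ifs
  · exact zero_mem _
  have hsum : (fun q => (1 / 2 : ℝ) * ∑ a ∈ range 3,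
      intChoose (j + (a : ℤ)) (a : ℤ) * intChoose ((N : ℤ) - j - (a : ℤ)) (2 - (a : ℤ)) *
        (pdx^[a] (pdy^[2 - a] (f0 (j + (a : ℤ))))) q) =
      (1 / 2 : ℝ) • ∑ a ∈ range 3,
        (intChoose (j + (a : ℤ)) (a : ℤ) * intChoose ((N : ℤ) - j - (a : ℤ)) (2 - (a : ℤ))) •
          pdx^[a] (pdy^[2 - a] (f0 (j + (a : ℤ)))) := by
    ext q
    simp [Finset.sum_apply]
  rw [hsum]
  refine Submodule.smul_mem _ _ (Submodule.sum_mem _ fun a ha => Submodule.smul_mem _ _ ?_)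
  rw [mem_range] at ha
  exact polyFunDegreeLT_mono (by omega)
    (iterate_pdx_mem_polyFunDegreeLT (iterate_pdy_mem_polyFunDegreeLT (hf _) (2 - a)) a)

theorem Q2_mem_polyFunDegreeLT (hf : ∀ k, f0 k ∈ polyFunDegreeLT (d + 1)) (j : ℤ) :
    Q2 N f0 j ∈ polyFunDegreeLT (d - 2) := by
  have h1 := phi1_mem_polyFunDegreeLT (N := N) hf j
  have h2 : ∀ k, phi2 N f0 k ∈ polyFunDegreeLT (d - 2 + 1) := fun k =>
    polyFunDegreeLT_mono (by omega) (phi2_mem_polyFunDegreeLT hf k)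
  refine add_mem (add_mem (add_mem ?_ ?_) ?_) ?_
  · exact Submodule.smul_mem _ (2 : ℝ) (pdx_mem_polyFunDegreeLT (h2 (j - 1)))
  · exact Submodule.smul_mem _ (2 : ℝ) (pdy_mem_polyFunDegreeLT (h2 j))
  · exact iterate_pdx_mem_polyFunDegreeLT h1 2
  · exact iterate_pdy_mem_polyFunDegreeLT h1 2

end QuantumCorrection

theorem stmt_6 (N : ℕ) (f0 : ℤ → ℝ × ℝ → ℝ)
    (hzero : ∀ j : ℤ, (j < 0 ∨ (N : ℤ) < j) → f0 j = 0)
    (hpoly : ∀ j : ℤ, 0 ≤ j → j ≤ (N : ℤ) →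
      ∃ c : ℕ → ℕ → ℝ, ∀ q : ℝ × ℝ,
        f0 j q = ∑ a ∈ Finset.range (N + 1), ∑ b ∈ Finset.range (N + 1 - a),
          c a b * q.1 ^ a * q.2 ^ b) :
    ∀ j : ℕ, j < N → ∀ q : ℝ × ℝ,
      (pdx^[N - 1 - j] (pdy^[j] (Q2 N f0 (j : ℤ)))) q = 0 := by
  have hf : ∀ k, f0 k ∈ polyFunDegreeLT (N + 1) := by
    intro k
    by_cases hk : 0 ≤ k ∧ k ≤ (N : ℤ)
    · obtain ⟨c, hc⟩ := hpoly k hk.1 hk.2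
      rw [funext hc]
      exact sum_monomials_mem_polyFunDegreeLT (N + 1) c
    · rw [hzero k (by omega)]
      exact zero_mem _
  intro j _ q
  have hQ := iterate_pdx_mem_polyFunDegreeLT
    (iterate_pdy_mem_polyFunDegreeLT (Q2_mem_polyFunDegreeLT (N := N) hf j) j) (N - 1 - j)
  rw [show N - 2 - j - (N - 1 - j) = 0 by omega, polyFunDegreeLT_zero] at hQ
  rw [(Submodule.mem_bot ℝ).1 hQ, Pi.zero_apply]
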